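/- arXiv:2604.04326 — 7 statements merged into one kernel-verified Lean document; each statement's English description precedes it below -/
import Mathlib

section
/- Let e ≥ 2 and let λ be a partition with at most r parts, with r-beta numbers β₁ > β₂ > ⋯ > β_r ≥ 0. For 1 ≤ i ≤ r−1 set x_i = β_i − β_{i+1} and m_i = ⌈x_i / e⌉. Then the e-weight of λ satisfies w_e(λ) ≥ ∑_{i=1}^{r−1} i·(m_i − 1). -/
/-- The e-weight of a partition with at most r parts, given by its r-beta
numbers `β 0 > β 1 > ⋯ > β (r-1)`: the total number of rows of beads minus the
minimal possible total after making every runner flush. -/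
def eWeight (e r : ℕ) (β : ℕ → ℕ) : ℕ :=
  (∑ i ∈ Finset.range r, β i / e) -
    ∑ b ∈ Finset.range e,
      Nat.choose ((Finset.range r).filter fun i => β i % e = b).card 2

/-! On the runner of `β j`, the positions below `β j` number `β j / e`. Among them are the
`β k` with `j < k` on the same runner, and, for every `i ≥ j`, at least `(x_i - 1) / e`
positions inside the gap `(β (i + 1), β i)`, which holds `x_i - 1` consecutive integers. Summing
over `j`, the gap of index `i` is counted `i + 1` times and the pairs `j < k` on a common runner
give `∑_b (n_b choose 2)`, where runner `b` holds `n_b` beads; hence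
`∑ (i + 1) (m_i - 1) + ∑_b (n_b choose 2) ≤ ∑ β j / e`. -/

open Finset

theorem Finset.sum_range_succ_nsmul_eq {M : Type*} [AddCommMonoid M] (f : ℕ → M) (n : ℕ) :
    ∑ i ∈ range (n + 1), (i + 1) • f i =
      ∑ i ∈ range (n + 1), f i + ∑ i ∈ range n, (i + 1) • f (i + 1) := by
  simp only [sum_range_succ' _ n, add_nsmul, one_nsmul, sum_add_distrib]
  abel

namespace Nat

theorem choose_two_add_ite (n : ℕ) (c : Prop) [Decidable c] :
    (n + if c then 1 else 0).choose 2 = n.choose 2 + if c then n else 0 := by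
  split_ifs <;> simp [choose_succ_succ', add_comm]

variable {e : ℕ}

theorem count_modEq_self (he : 0 < e) (v : ℕ) : count (· ≡ v [MOD e]) v = v / e := by
  simp [count_modEq_card _ he]

theorem count_modEq_add_mul (he : 0 < e) (v c q : ℕ) :
    count (· ≡ v [MOD e]) (c + e * q) = count (· ≡ v [MOD e]) c + q := by
  simp only [count_modEq_card _ he, add_mul_div_left _ _ he, add_mul_mod_self_left]
  ring

theorem count_modEq_add_div_le (he : 0 < e) (v c m : ℕ) :
    count (· ≡ v [MOD e]) c + m / e ≤ count (· ≡ v [MOD e]) (c + m) := by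
  rw [← count_modEq_add_mul he]
  exact count_monotone _ (Nat.add_le_add_left (mul_div_le m e) c)

theorem count_modEq_add_ite_add_div_le (he : 0 < e) (v : ℕ) {a b : ℕ} (hab : a < b) :
    count (· ≡ v [MOD e]) a + (if a ≡ v [MOD e] then 1 else 0) + (b - a - 1) / e ≤
      count (· ≡ v [MOD e]) b := by
  rw [← count_succ]
  simpa [show a + 1 + (b - a - 1) = b by omega] using
    count_modEq_add_div_le he v (a + 1) (b - a - 1)

end Nat

open Nat

variable {e : ℕ}

theorem sum_gap_div_add_count_modEq_le (he : 0 < e) (v : ℕ) :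
    ∀ (n : ℕ) (β : ℕ → ℕ), (∀ i < n, β (i + 1) < β i) →
      ∑ i ∈ range n, (β i - β (i + 1) - 1) / e + count (fun k => β (k + 1) ≡ v [MOD e]) n ≤
        count (· ≡ v [MOD e]) (β 0)
  | 0, β, _ => by simp
  | n + 1, β, hβ => by
    have ih := sum_gap_div_add_count_modEq_le he v n (fun k => β (k + 1))
      fun i hi => hβ (i + 1) (by omega)
    have gap := count_modEq_add_ite_add_div_le he v (hβ 0 n.succ_pos)
    rw [sum_range_succ', count_succ']
    omega

theorem sum_choose_two_count_mod_succ (he : 0 < e) (β : ℕ → ℕ) (n : ℕ) :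
    ∑ b ∈ range e, (count (fun i => β i % e = b) (n + 1)).choose 2 =
      ∑ b ∈ range e, (count (fun i => β (i + 1) % e = b) n).choose 2 +
        count (fun i => β (i + 1) ≡ β 0 [MOD e]) n := by
  simp only [count_succ', choose_two_add_ite, sum_add_distrib, sum_ite_eq, mem_range,
    mod_lt _ he, if_true]
  rfl

theorem sum_mul_gap_div_add_sum_choose_two_le (he : 0 < e) :
    ∀ (n : ℕ) (β : ℕ → ℕ), (∀ i < n, β (i + 1) < β i) →
      ∑ i ∈ range n, (i + 1) * ((β i - β (i + 1) - 1) / e) +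
          ∑ b ∈ range e, (count (fun i => β i % e = b) (n + 1)).choose 2 ≤
        ∑ i ∈ range (n + 1), β i / e
  | 0, β, _ => by simp [sum_choose_two_count_mod_succ he]
  | n + 1, β, hβ => by
    have ih := sum_mul_gap_div_add_sum_choose_two_le he n (fun k => β (k + 1))
      fun i hi => hβ (i + 1) (by omega)
    have top := sum_gap_div_add_count_modEq_le he (β 0) (n + 1) β hβ
    rw [count_modEq_self he] at top
    have weights := sum_range_succ_nsmul_eq (fun i => (β i - β (i + 1) - 1) / e) n
    simp only [smul_eq_mul] at weights
    rw [weights, sum_choose_two_count_mod_succ he, sum_range_succ' (fun i => β i / e)]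
    omega

/-- Lower bound for the e-weight in terms of the ceilings of the consecutive
beta differences: w_e(λ) ≥ ∑_{i=1}^{r−1} i·(m_i − 1) where m_i = ⌈(β_i−β_{i+1})/e⌉. -/
theorem eWeight_lower_bound (e r : ℕ) (he : 2 ≤ e) (β : ℕ → ℕ)
    (hβ : ∀ i j, i < j → j < r → β j < β i) :
    ∑ i ∈ Finset.range (r - 1),
      (i + 1) * ((β i - β (i + 1) + e - 1) / e - 1) ≤ eWeight e r β := by
  obtain _ | n := r
  · simp
  have he₀ : 0 < e := by omega
  have hβ' : ∀ i < n, β (i + 1) < β i := fun i hi => hβ i (i + 1) (by omega) (by omega)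
  have ceil_sub_one : ∀ i < n, (β i - β (i + 1) + e - 1) / e - 1 = (β i - β (i + 1) - 1) / e :=
    fun i hi => by
      rw [show β i - β (i + 1) + e - 1 = β i - β (i + 1) - 1 + e by have := hβ' i hi; omega,
        Nat.add_div_right _ he₀, Nat.add_sub_cancel]
  rw [eWeight, add_tsub_cancel_right]
  refine Nat.le_sub_of_add_le ?_
  simp only [← count_eq_card_filter_range]
  rw [sum_congr rfl fun i hi => by rw [ceil_sub_one i (mem_range.mp hi)]]
  exact sum_mul_gap_div_add_sum_choose_two_le he₀ n β hβ'
end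

section
/- Fix r ≥ 2, e ≥ 2, w ≥ 0. If a point (a₁,...,a_{r−1}) with all a_i ≥ 1 is the difference vector of the r-beta numbers of some partition with at most r parts and e-weight w, then the point (a₁ + e, a₂, ..., a_{r−1}) is the difference vector of the beta numbers of some partition with at most r parts and e-weight w+1. Conversely, if (b₁,...,b_{r−1}) with b₁ > e arises from a partition of e-weight w+1, then (b₁ − e, b₂, ..., b_{r−1}) arises from a partition of e-weight w. -/
/-- The vector `a` (of length r−1) arises as the difference vector of the
r-beta numbers of some partition with at most r parts and e-weight w. -/
def arisesAt (e r w : ℕ) (a : ℕ → ℕ) : Prop :=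
  ∃ β : ℕ → ℕ, (∀ i j, i < j → j < r → β j < β i) ∧ eWeight e r β = w ∧
    ∀ i, i + 1 < r → β i - β (i + 1) = a i

lemma choose_two_le_sum (s : Finset ℕ) : s.card.choose 2 ≤ ∑ x ∈ s, x := by
  induction s using Finset.strongInduction with
  | _ s ih =>
    rcases s.eq_empty_or_nonempty with rfl | hs
    · simp
    · set m := s.max' hs with hm
      have hmem : m ∈ s := s.max'_mem hs
      have h1 := ih (s.erase m) (Finset.erase_ssubset hmem)
      have hcard : (s.erase m).card = s.card - 1 := Finset.card_erase_of_mem hmem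
      have hsum : ∑ x ∈ s, x = m + ∑ x ∈ s.erase m, x :=
        (Finset.add_sum_erase s id hmem).symm
      have hle : s.card ≤ m + 1 := by
        have : s ⊆ Finset.range (m + 1) := by
          intro x hx
          simp only [Finset.mem_range, Nat.lt_succ_iff]
          exact s.le_max' x hx
        simpa using Finset.card_le_card this
      have hpos : s.card ≠ 0 := by
        have := Finset.card_pos.mpr hs; omega
      obtain ⟨n, hn⟩ := Nat.exists_eq_succ_of_ne_zero hpos
      rw [hcard, hn, Nat.succ_sub_one] at h1
      rw [hsum, hn]
      have hch : (n + 1).choose 2 = n + n.choose 2 := by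
        simp [Nat.choose_succ_succ]
      simp only [Nat.succ_eq_add_one] at h1 hn ⊢
      omega

lemma sum_choose_le (e r : ℕ) (he : 0 < e) (β : ℕ → ℕ)
    (hβ : ∀ i j, i < j → j < r → β j < β i) :
    (∑ b ∈ Finset.range e,
      Nat.choose ((Finset.range r).filter fun i => β i % e = b).card 2) ≤
    ∑ i ∈ Finset.range r, β i / e := by
  have hinj : ∀ i ∈ Finset.range r, ∀ j ∈ Finset.range r, i ≠ j → β i ≠ β j := by
    intro i hi j hj hij
    simp only [Finset.mem_range] at hi hj
    rcases Nat.lt_or_ge i j with h | h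
    · exact (hβ i j h hj).ne'
    · exact (hβ j i (lt_of_le_of_ne h (Ne.symm hij)) hi).ne
  have hsplit : ∑ i ∈ Finset.range r, β i / e =
      ∑ b ∈ Finset.range e, ∑ i ∈ (Finset.range r).filter (fun i => β i % e = b),
        β i / e := by
    rw [Finset.sum_fiberwise_of_maps_to]
    intro i _
    exact Finset.mem_range.mpr (Nat.mod_lt _ he)
  rw [hsplit]
  apply Finset.sum_le_sum
  intro b _
  set s := (Finset.range r).filter (fun i => β i % e = b) with hs
  have hinj2 : Set.InjOn (fun i => β i / e) s := by
    intro i hi j hj hij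
    simp only [hs, Finset.coe_filter, Set.mem_setOf_eq, Finset.mem_range] at hi hj
    dsimp only at hij
    by_contra hne
    apply hinj i (Finset.mem_range.mpr hi.1) j (Finset.mem_range.mpr hj.1) hne
    have e1 : β i % e = b := hi.2
    have e2 : β j % e = b := hj.2
    have d1 := Nat.div_add_mod (β i) e
    have d2 := Nat.div_add_mod (β j) e
    rw [hij] at d1
    omega
  have himg : ∑ q ∈ s.image (fun i => β i / e), q = ∑ i ∈ s, β i / e :=
    Finset.sum_image fun i hi j hj h => hinj2 hi hj h
  have hcard : (s.image (fun i => β i / e)).card = s.card :=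
    Finset.card_image_of_injOn hinj2
  calc s.card.choose 2 = (s.image (fun i => β i / e)).card.choose 2 := by rw [hcard]
    _ ≤ ∑ q ∈ s.image (fun i => β i / e), q := choose_two_le_sum _
    _ = ∑ i ∈ s, β i / e := himg

/-- Translation by eΛ₁ embeds W_{r,e,w} into W_{r,e,w+1}, and weights in
W_{r,e,w+1} with first coordinate > e come from W_{r,e,w}. -/
theorem weight_shift_embedding (e r w : ℕ) (he : 2 ≤ e) (hr : 2 ≤ r) :
    (∀ a : ℕ → ℕ, (∀ i, i + 1 < r → 1 ≤ a i) → arisesAt e r w a →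
      arisesAt e r (w + 1) (fun i => if i = 0 then a 0 + e else a i)) ∧
    (∀ b : ℕ → ℕ, e < b 0 → arisesAt e r (w + 1) b →
      arisesAt e r w (fun i => if i = 0 then b 0 - e else b i)) := by
  have he0 : 0 < e := by omega
  constructor
  · rintro a _ ⟨β, hdec, hwt, hdiff⟩
    refine ⟨fun i => if i = 0 then β 0 + e else β i, ?_, ?_, ?_⟩
    · intro i j hij hjr
      have hj0 : j ≠ 0 := by omega
      by_cases hi0 : i = 0
      · subst hi0
        have := hdec 0 j hij hjr
        simp [hj0]
        omega
      · simp [hi0, hj0]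
        exact hdec i j hij hjr
    · have hS : ∑ i ∈ Finset.range r,
          (if i = 0 then β 0 + e else β i) / e =
          (∑ i ∈ Finset.range r, β i / e) + 1 := by
        have h0 : (0 : ℕ) ∈ Finset.range r := Finset.mem_range.mpr (by omega)
        rw [← Finset.add_sum_erase _ _ h0, ← Finset.add_sum_erase _ (fun i => β i / e) h0]
        have hrest : ∑ i ∈ (Finset.range r).erase 0,
            (if i = 0 then β 0 + e else β i) / e =
            ∑ i ∈ (Finset.range r).erase 0, β i / e := by
          apply Finset.sum_congr rfl
          intro i hi
          rw [if_neg (Finset.ne_of_mem_erase hi)]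
        rw [hrest, if_pos rfl, Nat.add_div_right _ he0]
        ring
      have hC : ∀ b, ((Finset.range r).filter
            fun i => (if i = 0 then β 0 + e else β i) % e = b).card =
          ((Finset.range r).filter fun i => β i % e = b).card := by
        intro b
        congr 1
        apply Finset.filter_congr
        intro i _
        by_cases hi0 : i = 0
        · subst hi0; simp [Nat.add_mod_right]
        · simp [hi0]
      have hkey := sum_choose_le e r he0 β hdec
      unfold eWeight at hwt ⊢
      simp only [hC, hS]
      omega
    · intro i hir
      have h := hdiff i hir
      by_cases hi0 : i = 0
      · subst hi0
        have h1 := hdec 0 1 (by omega) (by omega)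
        simp only [show (0 : ℕ) + 1 = 1 from rfl] at h
        simp
        omega
      · simp [hi0]
        exact h
  · rintro b hb ⟨β, hdec, hwt, hdiff⟩
    have hd0 : β 0 - β 1 = b 0 := hdiff 0 (by omega)
    have h01 : β 1 < β 0 := hdec 0 1 (by omega) (by omega)
    have hge : e + β 1 < β 0 := by omega
    obtain ⟨c, hc⟩ : ∃ c, β 0 = c + e := ⟨β 0 - e, by omega⟩
    refine ⟨fun i => if i = 0 then c else β i, ?_, ?_, ?_⟩
    · intro i j hij hjr
      have hj0 : j ≠ 0 := by omega
      by_cases hi0 : i = 0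
      · subst hi0
        have hj1 : β j ≤ β 1 := by
          rcases Nat.lt_or_ge 1 j with h | h
          · exact (hdec 1 j h hjr).le
          · have : j = 1 := by omega
            simp [this]
        simp [hj0]
        omega
      · simp [hi0, hj0]
        exact hdec i j hij hjr
    · have hS : ∑ i ∈ Finset.range r, β i / e =
          (∑ i ∈ Finset.range r,
            (if i = 0 then c else β i) / e) + 1 := by
        have h0 : (0 : ℕ) ∈ Finset.range r := Finset.mem_range.mpr (by omega)
        rw [← Finset.add_sum_erase _ (fun i => β i / e) h0,
          ← Finset.add_sum_erase _ (fun i => (if i = 0 then c else β i) / e) h0]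
        have hrest : ∑ i ∈ (Finset.range r).erase 0,
            (if i = 0 then c else β i) / e =
            ∑ i ∈ (Finset.range r).erase 0, β i / e := by
          apply Finset.sum_congr rfl
          intro i hi
          rw [if_neg (Finset.ne_of_mem_erase hi)]
        rw [hrest, if_pos rfl, hc, Nat.add_div_right _ he0]
        ring
      have hC : ∀ d, ((Finset.range r).filter
            fun i => (if i = 0 then c else β i) % e = d).card =
          ((Finset.range r).filter fun i => β i % e = d).card := by
        intro d
        congr 1
        apply Finset.filter_congr
        intro i _
        by_cases hi0 : i = 0
        · subst hi0
          simp [hc, Nat.add_mod_right]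
        · simp [hi0]
      unfold eWeight at hwt ⊢
      simp only [hC]
      omega
    · intro i hir
      have h := hdiff i hir
      by_cases hi0 : i = 0
      · subst hi0
        simp only [show (0 : ℕ) + 1 = 1 from rfl] at h
        simp
        omega
      · simp [hi0] at h ⊢
        exact h
end

section
/- Let e ≥ 2 and fix k ∈ {0,...,e−1}. For a partition λ with r-beta numbers β_i = a_i·e + b_i (0 ≤ b_i < e), define β⁺_i = a_i·(e+1) + b_i + [b_i ≥ k]. Then for all 1 ≤ i < j ≤ r: ⌊(β_i − β_j)/e⌋ = ⌊(β⁺_i − β⁺_j)/(e+1)⌋. -/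
private lemma ediv_eq_of_bounds (z d q : ℤ) (hd : 0 < d) (h1 : q * d ≤ z)
    (h2 : z < (q + 1) * d) : z / d = q := by
  have hz : z = (z - q * d) + q * d := by ring
  rw [hz, Int.add_mul_ediv_right _ _ hd.ne',
    Int.ediv_eq_zero_of_lt (by linarith) (by nlinarith)]
  ring

/-- Inserting an empty runner preserves all Shi coefficients: for beta numbers
β_i = a_i·e + b_i and β⁺_i = a_i·(e+1) + b_i + [b_i ≥ k], we have
⌊(β_i − β_j)/e⌋ = ⌊(β⁺_i − β⁺_j)/(e+1)⌋ for all i < j. -/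
theorem shi_coefficients_stable (e r k : ℕ) (he : 2 ≤ e) (hk : k < e)
    (a b : ℕ → ℕ) (hb : ∀ i < r, b i < e)
    (hdec : ∀ i j, i < j → j < r → a j * e + b j < a i * e + b i) :
    ∀ i j, i < j → j < r →
      (((a i * e + b i : ℕ) : ℤ) - ((a j * e + b j : ℕ) : ℤ)).fdiv (e : ℤ) =
      (((a i * (e + 1) + b i + (if k ≤ b i then 1 else 0) : ℕ) : ℤ) -
        ((a j * (e + 1) + b j + (if k ≤ b j then 1 else 0) : ℕ) : ℤ)).fdiv
          ((e : ℤ) + 1) := by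
  intro i j hij hjr
  have hbi := hb i (hij.trans hjr)
  have hbj := hb j hjr
  have he0 : (0 : ℤ) < (e : ℤ) := by exact_mod_cast (by omega : 0 < e)
  have he1 : (0 : ℤ) < (e : ℤ) + 1 := by linarith
  rw [Int.fdiv_eq_ediv_of_nonneg _ he0.le, Int.fdiv_eq_ediv_of_nonneg _ he1.le]
  have hbiZ : ((b i : ℤ)) < (e : ℤ) := by exact_mod_cast hbi
  have hbjZ : ((b j : ℤ)) < (e : ℤ) := by exact_mod_cast hbj
  by_cases hij' : b j ≤ b i
  · have hbb : ((b j : ℤ)) ≤ (b i : ℤ) := by exact_mod_cast hij'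
    have hE : (if k ≤ b j then (1:ℕ) else 0) ≤ (if k ≤ b i then (1:ℕ) else 0) := by
      split_ifs with h1 h2 <;> omega
    rw [ediv_eq_of_bounds _ _ ((a i : ℤ) - (a j : ℤ)) he0 (by push_cast; linarith)
        (by push_cast; linarith),
      ediv_eq_of_bounds _ _ ((a i : ℤ) - (a j : ℤ)) he1 ?_ ?_]
    · push_cast
      split_ifs with h1 h2 h2 <;> first | (exfalso; omega) | (push_cast; linarith)
    · push_cast
      split_ifs with h1 h2 h2 <;> first | (exfalso; omega) | (push_cast; linarith)
  · have hbb : ((b i : ℤ)) < (b j : ℤ) := by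
      have : b i < b j := by omega
      exact_mod_cast this
    rw [ediv_eq_of_bounds _ _ ((a i : ℤ) - (a j : ℤ) - 1) he0 (by push_cast; linarith)
        (by push_cast; linarith),
      ediv_eq_of_bounds _ _ ((a i : ℤ) - (a j : ℤ) - 1) he1 ?_ ?_]
    · push_cast
      split_ifs with h1 h2 h2 <;> first | (exfalso; omega) | (push_cast; linarith)
    · push_cast
      split_ifs with h1 h2 h2 <;> first | (exfalso; omega) | (push_cast; linarith)
end

section
/- Fix integers e > r ≥ 2. The map sending a tuple (g₁,...,g_j) of nonnegative integers with g₁ + ⋯ + g_j = e − j (with 1 ≤ j ≤ r) to the difference vector of beta numbers of the e-core partition whose e-abacus has j flush nonempty runners at positions s₁ = 0 < s₂ < ⋯ < s_j (where s_{m+1} − s_m = g_m + 1) carrying μ₁,...,μ_j beads respectively, is injective, for any fixed composition μ = (μ₁,...,μ_j) of r. -/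
/-!
Two descending lists of naturals with the same last entry are determined by their consecutive
differences, so the difference vector recovers the multiset of beta numbers (its minimum is the
bead at position `0`). Since every runner position is below `e`, the beta numbers below `e` are
exactly the runner positions `s₁ < ⋯ < s_j`, and a strictly increasing enumeration of a set is
unique. Together with `s_{j+1} = e` this recovers every gap `g_m = s_{m+1} - s_m - 1`.
-/

/-- Given a composition μ of r with j parts and gap variables g (summing to
e−j), the corresponding flush e-abacus has nonempty runners at positions
s m = ∑_{t<m} (g t + 1), with μ m beads (rows 0,…,μ m − 1) on runner s m.
This is the difference vector of the resulting sorted-decreasing beta numbers. -/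
def coreDiffVec (e j : ℕ) (μ g : ℕ → ℕ) : List ℕ :=
  let s : ℕ → ℕ := fun m => ∑ t ∈ Finset.range m, (g t + 1)
  let l : List ℕ :=
    ((((Finset.range j).val.bind
      (fun m => (Multiset.range (μ m)).map (fun row => row * e + s m))).sort
        (· ≤ ·))).reverse
  l.zipWith (· - ·) l.tail

theorem List.eq_of_zipWith_sub_tail_eq :
    ∀ {l l' : List ℕ}, l.IsChain (· ≥ ·) → l'.IsChain (· ≥ ·) → l.getLast? = l'.getLast? →
      l.zipWith (· - ·) l.tail = l'.zipWith (· - ·) l'.tail → l = l'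
  | [], [], _, _, _, _ => rfl
  | [], _ :: _, _, _, hlast, _ => by simp [eq_comm] at hlast
  | _ :: _, [], _, _, hlast, _ => by simp at hlast
  | [_], [_], _, _, hlast, _ => by simpa using hlast
  | [_], _ :: _ :: _, _, _, _, h => by simp at h
  | _ :: _ :: _, [_], _, _, _, h => by simp at h
  | a :: b :: t, a' :: b' :: t', hc, hc', hlast, h => by
      simp only [List.tail_cons, List.zipWith_cons_cons, List.cons.injEq] at h
      rw [List.getLast?_cons_cons, List.getLast?_cons_cons] at hlast
      have htail : b :: t = b' :: t' :=
        List.eq_of_zipWith_sub_tail_eq hc.tail hc'.tail hlast h.2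
      obtain ⟨rfl, rfl⟩ := List.cons.inj htail
      have hab : b ≤ a := (List.isChain_cons_cons.mp hc).1
      have hab' : b ≤ a' := (List.isChain_cons_cons.mp hc').1
      have : a = a' := by omega
      rw [this]

def descDiffs (M : Multiset ℕ) : List ℕ :=
  let l := (M.sort (· ≤ ·)).reverse
  l.zipWith (· - ·) l.tail

theorem List.head?_eq_zero_of_pairwise_le {l : List ℕ} (hl : l.Pairwise (· ≤ ·))
    (h0 : 0 ∈ l) : l.head? = some 0 := by
  cases l with
  | nil => simp at h0
  | cons a t =>
    have ha : a ≤ 0 := by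
      rcases List.mem_cons.mp h0 with h | h
      · exact h.ge
      · exact List.rel_of_pairwise_cons hl h
    simp [Nat.le_zero.mp ha]

theorem getLast?_reverse_sort_eq_zero {M : Multiset ℕ} (h0 : 0 ∈ M) :
    (M.sort (· ≤ ·)).reverse.getLast? = some 0 := by
  rw [List.getLast?_reverse]
  exact List.head?_eq_zero_of_pairwise_le (Multiset.pairwise_sort M _)
    (by rwa [← Multiset.mem_coe, Multiset.sort_eq])

theorem isChain_reverse_sort (M : Multiset ℕ) : (M.sort (· ≤ ·)).reverse.IsChain (· ≥ ·) :=
  (List.pairwise_reverse.mpr (Multiset.pairwise_sort M (· ≤ ·))).isChain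

theorem eq_of_descDiffs_eq {M M' : Multiset ℕ} (h0 : 0 ∈ M) (h0' : 0 ∈ M')
    (h : descDiffs M = descDiffs M') : M = M' := by
  have hsort : M.sort (· ≤ ·) = M'.sort (· ≤ ·) :=
    List.reverse_injective <| List.eq_of_zipWith_sub_tail_eq (isChain_reverse_sort M)
      (isChain_reverse_sort M')
      ((getLast?_reverse_sort_eq_zero h0).trans (getLast?_reverse_sort_eq_zero h0').symm) h
  rw [← Multiset.sort_eq M (· ≤ ·), hsort, Multiset.sort_eq]

/-- Indices start at `0`: `runnerPos g m` is the paper's `s_{m+1}`. -/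
def runnerPos (g : ℕ → ℕ) (m : ℕ) : ℕ := ∑ t ∈ Finset.range m, (g t + 1)

theorem runnerPos_eq_sum_add (g : ℕ → ℕ) (m : ℕ) :
    runnerPos g m = ∑ t ∈ Finset.range m, g t + m := by
  simp [runnerPos, Finset.sum_add_distrib]

theorem runnerPos_succ (g : ℕ → ℕ) (m : ℕ) :
    runnerPos g (m + 1) = runnerPos g m + (g m + 1) :=
  Finset.sum_range_succ _ m

theorem runnerPos_strictMono (g : ℕ → ℕ) : StrictMono (runnerPos g) :=
  strictMono_nat_of_lt_succ fun m => by rw [runnerPos_succ]; omega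

theorem gap_eq_runnerPos_sub (g : ℕ → ℕ) (m : ℕ) :
    g m = runnerPos g (m + 1) - runnerPos g m - 1 := by
  rw [runnerPos_succ]; omega

section GapSum

variable {e j : ℕ} {g : ℕ → ℕ}

theorem runnerPos_lt (hje : j ≤ e) (hg : ∑ t ∈ Finset.range j, g t = e - j) {m : ℕ}
    (hm : m < j) : runnerPos g m < e := by
  have : ∑ t ∈ Finset.range m, g t ≤ ∑ t ∈ Finset.range j, g t :=
    Finset.sum_le_sum_of_subset (Finset.range_subset_range.mpr hm.le)
  rw [runnerPos_eq_sum_add]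
  omega

theorem runnerPos_self (hje : j ≤ e) (hg : ∑ t ∈ Finset.range j, g t = e - j) :
    runnerPos g j = e := by
  rw [runnerPos_eq_sum_add]
  omega

end GapSum

def betaMultiset (e j : ℕ) (μ g : ℕ → ℕ) : Multiset ℕ :=
  (Finset.range j).val.bind
    fun m => (Multiset.range (μ m)).map fun row => row * e + runnerPos g m

theorem coreDiffVec_eq_descDiffs (e j : ℕ) (μ g : ℕ → ℕ) :
    coreDiffVec e j μ g = descDiffs (betaMultiset e j μ g) := rfl

section Beta

variable {e j : ℕ} {μ g : ℕ → ℕ}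

theorem mem_betaMultiset {x : ℕ} :
    x ∈ betaMultiset e j μ g ↔ ∃ m < j, ∃ row < μ m, row * e + runnerPos g m = x := by
  simp [betaMultiset]

theorem zero_mem_betaMultiset (hj : 0 < j) (hμ : 0 < μ 0) : 0 ∈ betaMultiset e j μ g :=
  mem_betaMultiset.mpr ⟨0, hj, 0, hμ, by simp [runnerPos]⟩

theorem range_runnerPos_eq (hμ : ∀ m < j, 0 < μ m) (hs : ∀ m < j, runnerPos g m < e) :
    Set.range (runnerPos g ∘ (Fin.val : Fin j → ℕ)) = {x | x ∈ betaMultiset e j μ g ∧ x < e} := by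
  ext x
  constructor
  · rintro ⟨⟨m, hm⟩, rfl⟩
    exact ⟨mem_betaMultiset.mpr ⟨m, hm, 0, hμ m hm, by simp⟩, hs m hm⟩
  · rintro ⟨hx, hxe⟩
    obtain ⟨m, hm, row, -, rfl⟩ := mem_betaMultiset.mp hx
    obtain rfl : row = 0 := by
      by_contra hrow
      have : e ≤ row * e := Nat.le_mul_of_pos_left e (Nat.pos_of_ne_zero hrow)
      omega
    exact ⟨⟨m, hm⟩, by simp⟩

end Beta

theorem core_gap_map_injective_general (e r j : ℕ) (hre : r < e)
    (hj1 : 1 ≤ j) (hjr : j ≤ r) (μ : ℕ → ℕ)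
    (hμpos : ∀ t < j, 1 ≤ μ t)
    (g g' : ℕ → ℕ)
    (hg : ∑ t ∈ Finset.range j, g t = e - j)
    (hg' : ∑ t ∈ Finset.range j, g' t = e - j)
    (heq : coreDiffVec e j μ g = coreDiffVec e j μ g') :
    ∀ t < j, g t = g' t := by
  have hje : j ≤ e := by omega
  have hM : betaMultiset e j μ g = betaMultiset e j μ g' :=
    eq_of_descDiffs_eq (zero_mem_betaMultiset hj1 (hμpos 0 hj1))
      (zero_mem_betaMultiset hj1 (hμpos 0 hj1)) heq
  have hfin : runnerPos g ∘ (Fin.val : Fin j → ℕ) = runnerPos g' ∘ Fin.val := by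
    refine ((runnerPos_strictMono g).comp Fin.val_strictMono).range_inj
      ((runnerPos_strictMono g').comp Fin.val_strictMono) |>.mp ?_
    rw [range_runnerPos_eq hμpos fun m => runnerPos_lt hje hg,
      range_runnerPos_eq hμpos fun m => runnerPos_lt hje hg', hM]
  have hpos : ∀ m ≤ j, runnerPos g m = runnerPos g' m := by
    intro m hm
    rcases hm.lt_or_eq with hm | rfl
    · exact congrFun hfin ⟨m, hm⟩
    · rw [runnerPos_self hje hg, runnerPos_self hje hg']
  intro t ht
  rw [gap_eq_runnerPos_sub g, gap_eq_runnerPos_sub g', hpos t ht.le, hpos (t + 1) ht]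

/-- The map from gap tuples to difference vectors of e-core beta numbers is
injective, for each fixed composition μ of r. -/
theorem core_gap_map_injective (e r j : ℕ) (hr : 2 ≤ r) (hre : r < e)
    (hj1 : 1 ≤ j) (hjr : j ≤ r) (μ : ℕ → ℕ)
    (hμpos : ∀ t < j, 1 ≤ μ t) (hμsum : ∑ t ∈ Finset.range j, μ t = r)
    (g g' : ℕ → ℕ)
    (hg : ∑ t ∈ Finset.range j, g t = e - j)
    (hg' : ∑ t ∈ Finset.range j, g' t = e - j)
    (heq : coreDiffVec e j μ g = coreDiffVec e j μ g') :
    ∀ t < j, g t = g' t :=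
  core_gap_map_injective_general e r j hre hj1 hjr μ hμpos g g' hg hg' heq
end

section
/- Fix integers e > r ≥ 2 and w ≥ 0, write w = rm + n with 0 ≤ n ≤ r−1, and consider the e-abacus with one bead at row m+1 on each of runners 0,...,n−1 and one bead at row m on each of runners n,...,r−1. Then the difference vector (a₁,...,a_{r−1}) of the resulting beta numbers satisfies a_i = 1 for i ≠ n and a_n = e − r + 1, and hence a_i ≥ 1 for all i and ∑_{i=1}^{r−1} a_i ≤ e − 1 (the weight lies in the interior of the fundamental e-alcove); moreover the corresponding partition has e-weight w. -/
private lemma mono_of_step (f : ℕ → ℕ) (k : ℕ) (h : ∀ i, i < k → f (i + 1) ≤ f i) :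
    ∀ j, j ≤ k → f j ≤ f 0 := by
  intro j
  induction j with
  | zero => intro _; exact le_refl _
  | succ j ih => intro hj; exact le_trans (h j (by omega)) (ih (by omega))

private lemma tele_sum (f : ℕ → ℕ) :
    ∀ k, (∀ i, i < k → f (i + 1) ≤ f i) →
      (∑ i ∈ Finset.range k, (f i - f (i + 1))) = f 0 - f k := by
  intro k
  induction k with
  | zero => simp
  | succ k ih =>
      intro h
      rw [Finset.sum_range_succ, ih (fun i hi => h i (Nat.lt_succ_of_lt hi))]
      have h1 : f (k + 1) ≤ f k := h k (Nat.lt_succ_self k)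
      have h2 : f k ≤ f 0 := mono_of_step f (k + 1) h k (by omega)
      omega

/-- Writing w = rm + n, the abacus with one bead at row m+1 on runners
0,…,n−1 and one bead at row m on runners n,…,r−1 has sorted-decreasing beta
numbers whose difference vector is 1 everywhere except e−r+1 at position n;
the resulting weight is interior to the fundamental e-alcove and the
corresponding partition has e-weight w. (Here `β i` is the (i+1)-st largest
beta number, and position i of the difference vector is a_{i+1}.) -/
theorem fundamental_alcove_label (e r w : ℕ) (hr : 2 ≤ r) (hre : r < e) :
    let m := w / r
    let n := w % r
    let β : ℕ → ℕ := fun i =>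
      if i < n then (m + 1) * e + (n - 1 - i) else m * e + (r - 1 + n - i)
    (∀ i, i + 1 < r →
        (i + 1 ≠ n → β i - β (i + 1) = 1) ∧
        (i + 1 = n → β i - β (i + 1) = e - r + 1)) ∧
    (∀ i j, i < j → j < r → β j < β i) ∧
    (∀ i, i + 1 < r → 1 ≤ β i - β (i + 1)) ∧
    (∑ i ∈ Finset.range (r - 1), (β i - β (i + 1))) ≤ e - 1 ∧
    eWeight e r β = w := by
  intro m n β
  have hn : n < r := Nat.mod_lt w (by omega)
  have hw : r * m + n = w := Nat.div_add_mod w r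
  have he : 0 < e := by omega
  have hstep : ∀ i, i + 1 < r →
      (i + 1 ≠ n → β i - β (i + 1) = 1) ∧
      (i + 1 = n → β i - β (i + 1) = e - r + 1) := by
    intro i hi
    simp only [β, add_one_mul]
    set M := m * e with hM
    constructor <;> intro h <;> (split_ifs <;> omega)
  have hlt : ∀ i j, i < j → j < r → β j < β i := by
    intro i j hij hj
    simp only [β, add_one_mul]
    set M := m * e with hM
    split_ifs <;> omega
  refine ⟨hstep, hlt, ?_, ?_, ?_⟩
  · intro i hi
    rcases eq_or_ne (i + 1) n with h | h
    · have := (hstep i hi).2 h; omega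
    · have := (hstep i hi).1 h; omega
  · have hmono : ∀ i, i < r - 1 → β (i + 1) ≤ β i := by
      intro i hi
      exact (hlt i (i + 1) (by omega) (by omega)).le
    rw [tele_sum β (r - 1) hmono]
    simp only [β, add_one_mul]
    set M := m * e with hM
    split_ifs <;> omega
  · have hdiv : ∀ i, β i / e = if i < n then m + 1 else m := by
      intro i
      simp only [β]
      split_ifs with h
      · rw [mul_comm, Nat.mul_add_div he, Nat.div_eq_of_lt (by omega), Nat.add_zero]
      · rw [mul_comm, Nat.mul_add_div he, Nat.div_eq_of_lt (by omega), Nat.add_zero]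
    have hmod : ∀ i, β i % e = if i < n then n - 1 - i else r - 1 + n - i := by
      intro i
      simp only [β]
      split_ifs with h
      · rw [mul_comm, Nat.mul_add_mod, Nat.mod_eq_of_lt (by omega)]
      · rw [mul_comm, Nat.mul_add_mod, Nat.mod_eq_of_lt (by omega)]
    have hA : (∑ i ∈ Finset.range r, β i / e) = w := by
      calc ∑ i ∈ Finset.range r, β i / e
          = ∑ i ∈ Finset.range r, (m + if i < n then 1 else 0) := by
            refine Finset.sum_congr rfl fun i _ => ?_
            rw [hdiv i]; split_ifs <;> omega
        _ = r * m + ∑ i ∈ Finset.range r, (if i < n then 1 else 0) := by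
            rw [Finset.sum_add_distrib, Finset.sum_const, Finset.card_range, smul_eq_mul]
        _ = r * m + n := by
            congr 1
            have hfil : (Finset.range r).filter (fun i => i < n) = Finset.range n := by
              ext x; simp only [Finset.mem_filter, Finset.mem_range]; omega
            rw [Finset.sum_ite, Finset.sum_const_zero, add_zero, Finset.sum_const,
              smul_eq_mul, mul_one, hfil, Finset.card_range]
        _ = w := hw
    have hB : (∑ b ∈ Finset.range e,
        Nat.choose (((Finset.range r).filter fun i => β i % e = b).card) 2) = 0 := by
      apply Finset.sum_eq_zero
      intro b _
      apply Nat.choose_eq_zero_of_lt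
      have hc : (((Finset.range r).filter fun i => β i % e = b).card) ≤ 1 := by
        apply Finset.card_le_one.mpr
        intro i hi j hj
        simp only [Finset.mem_filter, Finset.mem_range] at hi hj
        have hi1 := hi.1
        have hj1 := hj.1
        have hi2 := hi.2
        have hj2 := hj.2
        rw [hmod i] at hi2
        rw [hmod j] at hj2
        split_ifs at hi2 hj2 <;> omega
      omega
    show (∑ i ∈ Finset.range r, β i / e) -
        (∑ b ∈ Finset.range e,
          Nat.choose (((Finset.range r).filter fun i => β i % e = b).card) 2) = w
    rw [hA, hB]
    omega
end

section
/- Fix integers e > r ≥ 2 and 1 ≤ i ≤ r−1. Let μ = (μ₁,...,μ_r) be a weak composition of w with μ_i ≠ μ_{i+1}, and consider beta numbers β_t = μ_t·e + (e − r + t − 1) for 1 ≤ t ≤ r, sorted in decreasing order. Let β'_t be the beta numbers similarly built from μσ_i (μ with entries i and i+1 swapped). Then for all positive roots α of sl_r, the quantities ⌊⟨α^∨, Ω⟩/e⌋ computed from β and from β' agree except for exactly one positive root, for which they differ by exactly 1. -/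
/-- For a weak composition μ of w of length r, the beta numbers
β_t = μ_t·e + (e − r + t − 1) (1 ≤ t ≤ r; here 0-based t with residue
e − r + t), sorted in decreasing order. -/
def sortedBetasDesc (e r : ℕ) (μ : ℕ → ℕ) : List ℕ :=
  ((((Finset.range r).val.map (fun t => μ t * e + (e - r + t))).sort
    (· ≤ ·))).reverse

/-!
Write each beta number as `e * q + ρ` with `0 ≤ ρ < e`. Then
`⌊(a - b) / e⌋ = q_a - q_b - [ρ_a < ρ_b]`. Passing from `μ` to `μσ_i` keeps every quotient
and exchanges the residues `ρ = e - r + i` and `ρ + 1`. The quotients of `β_i` and `β_{i+1}`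
differ because `μ_i ≠ μ_{i+1}`, so this exchange preserves the decreasing order of the betas.
Position by position, the sorted list therefore keeps its quotients and has its residues
permuted by the transposition `(ρ ρ+1)`. That transposition changes the comparison of two
residues only when they are exactly `ρ` and `ρ + 1`, and this happens for exactly one pair
of positions.
-/

open Equiv

namespace WallCrossing

theorem fdiv_natCast_sub_natCast (a b : ℕ) {e : ℕ} (he : 0 < e) :
    ((a : ℤ) - b).fdiv e = (a / e : ℕ) - (b / e : ℕ) - if a % e < b % e then 1 else 0 := by
  rw [Int.fdiv_eq_ediv_of_nonneg _ (by positivity), Int.ediv_eq_iff_of_pos (by exact_mod_cast he)]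
  have ha := Nat.mod_lt a he
  have hb := Nat.mod_lt b he
  rw [← Nat.div_add_mod a e, ← Nat.div_add_mod b e]
  simp only [Nat.mul_add_div he, Nat.mul_add_mod, Nat.mod_mod, Nat.cast_add, Nat.cast_mul,
    Nat.div_eq_of_lt ha, Nat.div_eq_of_lt hb]
  generalize a / e = qa, b / e = qb, a % e = ra at *
  generalize b % e = rb at *
  split_ifs <;> constructor <;> push_cast <;> nlinarith

theorem swap_succ_lt_swap_succ_iff {ρ u v : ℕ} (h₁ : ¬(u = ρ ∧ v = ρ + 1))
    (h₂ : ¬(u = ρ + 1 ∧ v = ρ)) : swap ρ (ρ + 1) u < swap ρ (ρ + 1) v ↔ u < v := by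
  simp only [swap_apply_def]
  split_ifs <;> omega

def residueSwap (e ρ n : ℕ) : ℕ := e * (n / e) + swap ρ (ρ + 1) (n % e)

section ResidueSwap

variable {e ρ : ℕ}

theorem swap_mod_lt (hρ : ρ + 1 < e) (n : ℕ) : swap ρ (ρ + 1) (n % e) < e := by
  have := Nat.mod_lt n (by omega : 0 < e)
  simp only [swap_apply_def]
  split_ifs <;> omega

theorem residueSwap_div (hρ : ρ + 1 < e) (n : ℕ) : residueSwap e ρ n / e = n / e := by
  rw [residueSwap, Nat.mul_add_div (by omega), Nat.div_eq_of_lt (swap_mod_lt hρ n), add_zero]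

theorem residueSwap_mod (hρ : ρ + 1 < e) (n : ℕ) :
    residueSwap e ρ n % e = swap ρ (ρ + 1) (n % e) := by
  rw [residueSwap, Nat.mul_add_mod, Nat.mod_eq_of_lt (swap_mod_lt hρ n)]

theorem residueSwap_lt_residueSwap (hρ : ρ + 1 < e) {a b : ℕ} (hab : a < b)
    (h : a / e = b / e → ¬(a % e = ρ ∧ b % e = ρ + 1)) :
    residueSwap e ρ a < residueSwap e ρ b := by
  rcases (Nat.div_le_div_right (c := e) hab.le).lt_or_eq with hdiv | hdiv
  · exact Nat.lt_of_div_lt_div (by rwa [residueSwap_div hρ, residueSwap_div hρ])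
  · have hmod : a % e < b % e := by
      have := Nat.div_add_mod a e
      have := Nat.div_add_mod b e
      rw [hdiv] at *
      omega
    have hswap := (swap_succ_lt_swap_succ_iff (h hdiv) (by omega)).2 hmod
    rw [residueSwap, residueSwap, hdiv]
    omega

end ResidueSwap

def shiCoeff (e : ℕ) (l : List ℕ) (x y : ℕ) : ℤ :=
  ((l.getD x 0 : ℤ) - (l.getD y 0 : ℤ)).fdiv e

theorem shiCoeff_map_residueSwap {e ρ : ℕ} (hρ : ρ + 1 < e) {l : List ℕ} {x y : ℕ}
    (hx : x < l.length) (hy : y < l.length) :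
    shiCoeff e (l.map (residueSwap e ρ)) x y = shiCoeff e l x y
      + (if l.getD x 0 % e < l.getD y 0 % e then 1 else 0)
      - (if swap ρ (ρ + 1) (l.getD x 0 % e) < swap ρ (ρ + 1) (l.getD y 0 % e) then 1 else 0) := by
  have he : 0 < e := by omega
  have hgetD : ∀ z < l.length, (l.map (residueSwap e ρ)).getD z 0 = residueSwap e ρ (l.getD z 0) :=
    fun z hz => by
      rw [List.getD_eq_getElem _ _ (by simpa using hz), List.getElem_map, List.getD_eq_getElem]
  rw [shiCoeff, shiCoeff, hgetD x hx, hgetD y hy, fdiv_natCast_sub_natCast _ _ he,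
    fdiv_natCast_sub_natCast _ _ he, residueSwap_div hρ, residueSwap_div hρ,
    residueSwap_mod hρ, residueSwap_mod hρ]
  ring

section Residues

variable {e : ℕ} {l : List ℕ}

theorem eq_of_getD_mod_eq (hl : (l.map (· % e)).Nodup) {z z' : ℕ} (hz : z < l.length)
    (hz' : z' < l.length) (h : l.getD z 0 % e = l.getD z' 0 % e) : z = z' := by
  rw [List.getD_eq_getElem _ _ hz, List.getD_eq_getElem _ _ hz'] at h
  simpa using (hl.getElem_inj_iff (i := z) (j := z') (hi := by simpa) (hj := by simpa)).1
    (by simpa using h)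

theorem exists_getD_mod_eq {s : ℕ} (hs : s ∈ l.map (· % e)) :
    ∃ z < l.length, l.getD z 0 % e = s := by
  obtain ⟨z, hz, rfl⟩ := List.mem_iff_getElem.1 hs
  rw [List.length_map] at hz
  exact ⟨z, hz, by rw [List.getD_eq_getElem _ _ hz, List.getElem_map]⟩

end Residues

theorem exists_shiCoeff_map_residueSwap {e ρ : ℕ} (hρ : ρ + 1 < e) {l : List ℕ}
    (hl : (l.map (· % e)).Nodup) (hρl : ρ ∈ l.map (· % e)) (hρl' : ρ + 1 ∈ l.map (· % e)) :
    ∃ x y, x < y ∧ y < l.length ∧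
      (shiCoeff e l x y = shiCoeff e (l.map (residueSwap e ρ)) x y + 1 ∨
        shiCoeff e (l.map (residueSwap e ρ)) x y = shiCoeff e l x y + 1) ∧
      ∀ x' y', x' < y' → y' < l.length → (x', y') ≠ (x, y) →
        shiCoeff e l x' y' = shiCoeff e (l.map (residueSwap e ρ)) x' y' := by
  obtain ⟨p, hp, hpρ⟩ := exists_getD_mod_eq hρl
  obtain ⟨q, hq, hqρ⟩ := exists_getD_mod_eq hρl'
  have hfix : ∀ x y, x < y → y < l.length → (x, y) ≠ (p, q) → (x, y) ≠ (q, p) →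
      shiCoeff e l x y = shiCoeff e (l.map (residueSwap e ρ)) x y := by
    intro x y hxy hy hpq hqp
    rw [shiCoeff_map_residueSwap hρ (hxy.trans hy) hy,
      if_congr (swap_succ_lt_swap_succ_iff ?_ ?_).symm rfl rfl, add_sub_cancel_right]
    · rintro ⟨hx, hy'⟩
      exact hpq (Prod.ext (eq_of_getD_mod_eq hl (hxy.trans hy) hp (hx.trans hpρ.symm))
        (eq_of_getD_mod_eq hl hy hq (hy'.trans hqρ.symm)))
    · rintro ⟨hx, hy'⟩
      exact hqp (Prod.ext (eq_of_getD_mod_eq hl (hxy.trans hy) hq (hx.trans hqρ.symm))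
        (eq_of_getD_mod_eq hl hy hp (hy'.trans hpρ.symm)))
  have hswap := shiCoeff_map_residueSwap hρ hp hq
  have hswap' := shiCoeff_map_residueSwap hρ hq hp
  simp only [hpρ, hqρ, swap_apply_left, swap_apply_right] at hswap hswap'
  rcases lt_or_gt_of_ne (fun h : p = q => by subst h; omega) with hpq | hqp
  · refine ⟨p, q, hpq, hq, Or.inr (by simp [hswap]), fun x y hxy hy hne => hfix x y hxy hy hne ?_⟩
    rintro ⟨⟩
    omega
  · refine ⟨q, p, hqp, hp, Or.inl (by simp [hswap']), fun x y hxy hy hne => hfix x y hxy hy ?_ hne⟩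
    rintro ⟨⟩
    omega

def betas (e r : ℕ) (μ : ℕ → ℕ) : Multiset ℕ :=
  (Finset.range r).val.map fun t => μ t * e + (e - r + t)

section Betas

variable {e r : ℕ} {μ : ℕ → ℕ}

theorem sortedBetasDesc_eq_reverse_sort (e r : ℕ) (μ : ℕ → ℕ) :
    sortedBetasDesc e r μ = ((betas e r μ).sort (· ≤ ·)).reverse :=
  rfl

theorem beta_mod (hre : r ≤ e) {t : ℕ} (ht : t < r) (m : ℕ) :
    (m * e + (e - r + t)) % e = e - r + t := by
  rw [Nat.mul_add_mod', Nat.mod_eq_of_lt (by omega)]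

theorem beta_div (hre : r ≤ e) {t : ℕ} (ht : t < r) (m : ℕ) :
    (m * e + (e - r + t)) / e = m := by
  rw [Nat.mul_comm, Nat.mul_add_div (by omega), Nat.div_eq_of_lt (by omega), add_zero]

theorem div_eq_of_mem_betas (hre : r ≤ e) {a t : ℕ} (ha : a ∈ betas e r μ) (ht : t < r)
    (hmod : a % e = e - r + t) : a / e = μ t := by
  obtain ⟨s, hs, rfl⟩ := Multiset.mem_map.1 ha
  rw [Finset.mem_val, Finset.mem_range] at hs
  rw [beta_mod hre hs] at hmod
  obtain rfl : s = t := by omega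
  exact beta_div hre ht _

theorem map_mod_sortedBetasDesc_perm (hre : r ≤ e) :
    ((sortedBetasDesc e r μ).map (· % e)).Perm ((List.range r).map (e - r + ·)) := by
  rw [← Multiset.coe_eq_coe, ← Multiset.map_coe, sortedBetasDesc_eq_reverse_sort,
    Multiset.coe_reverse, Multiset.sort_eq, betas, Multiset.map_map, ← Multiset.map_coe,
    Multiset.coe_range, Finset.range_val]
  refine Multiset.map_congr rfl fun t ht => ?_
  exact beta_mod hre (Finset.mem_range.1 ht) _

theorem betas_comp_swap (hre : r ≤ e) {i : ℕ} (hi : i + 1 < r) :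
    betas e r (μ ∘ swap i (i + 1)) = (betas e r μ).map (residueSwap e (e - r + i)) := by
  have hrange : (Finset.range r).map (swap i (i + 1)).toEmbedding = Finset.range r := by
    refine Finset.map_perm fun t ht => ?_
    simp only [Set.mem_ofPred_eq, swap_apply_def] at ht
    simp only [Finset.coe_range, Set.mem_Iio]
    split_ifs at ht <;> omega
  rw [betas, betas, Multiset.map_map]
  conv_lhs => rw [← hrange, Finset.map_val, Multiset.map_map]
  refine Multiset.map_congr rfl fun t ht => ?_
  rw [Finset.mem_val, Finset.mem_range] at ht
  simp only [Function.comp_apply, Equiv.coe_toEmbedding, swap_apply_self]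
  rw [residueSwap, beta_div hre ht, beta_mod hre ht, mul_comm e]
  congr 1
  simp only [swap_apply_def]
  split_ifs <;> omega

theorem strictMonoOn_residueSwap_betas (hre : r ≤ e) {i : ℕ} (hi : i + 1 < r)
    (hne : μ i ≠ μ (i + 1)) :
    StrictMonoOn (residueSwap e (e - r + i)) {a | a ∈ betas e r μ} := by
  intro a ha b hb hab
  refine residueSwap_lt_residueSwap (by omega) hab fun hdiv ⟨hai, hbi⟩ => hne ?_
  rw [← div_eq_of_mem_betas hre ha (by omega) hai, hdiv,
    div_eq_of_mem_betas hre hb hi (by omega)]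

theorem sortedBetasDesc_comp_swap (hre : r ≤ e) {i : ℕ} (hi : i + 1 < r)
    (hne : μ i ≠ μ (i + 1)) :
    sortedBetasDesc e r (μ ∘ swap i (i + 1)) =
      (sortedBetasDesc e r μ).map (residueSwap e (e - r + i)) := by
  have hmono := strictMonoOn_residueSwap_betas hre hi hne
  rw [sortedBetasDesc_eq_reverse_sort, sortedBetasDesc_eq_reverse_sort, betas_comp_swap hre hi,
    ← Multiset.map_sort _ _ (· ≤ ·) (· ≤ ·) fun a ha b hb => (hmono.le_iff_le ha hb).symm,
    List.map_reverse]

end Betas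

end WallCrossing

open WallCrossing

theorem wall_crossing_finite_reflection_general (e r i : ℕ)
    (hre : r < e) (hi : i + 1 < r) (μ : ℕ → ℕ)
    (hne : μ i ≠ μ (i + 1)) :
    let μ' : ℕ → ℕ := fun t =>
      if t = i then μ (i + 1) else if t = i + 1 then μ i else μ t
    let l := sortedBetasDesc e r μ
    let l' := sortedBetasDesc e r μ'
    let K : ℕ → ℕ → ℤ := fun x y => ((l.getD x 0 : ℤ) - (l.getD y 0 : ℤ)).fdiv e
    let K' : ℕ → ℕ → ℤ := fun x y =>
      ((l'.getD x 0 : ℤ) - (l'.getD y 0 : ℤ)).fdiv e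
    ∃ x y, x < y ∧ y < r ∧
      (K x y = K' x y + 1 ∨ K' x y = K x y + 1) ∧
      ∀ x' y', x' < y' → y' < r → (x', y') ≠ (x, y) → K x' y' = K' x' y' := by
  intro μ' l l' K K'
  have hμ' : μ' = μ ∘ swap i (i + 1) := by
    funext t
    simp only [μ', Function.comp_apply, swap_apply_def]
    split_ifs <;> rfl
  have hl' : l' = l.map (residueSwap e (e - r + i)) := by
    simp only [l', l, hμ']
    exact sortedBetasDesc_comp_swap hre.le hi hne
  have hperm := map_mod_sortedBetasDesc_perm (μ := μ) hre.le
  have hlen : l.length = r := by simpa using hperm.length_eq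
  have hres : ∀ t < r, e - r + t ∈ l.map (· % e) := fun t ht =>
    hperm.mem_iff.2 (List.mem_map_of_mem (List.mem_range.2 ht))
  have hcross := exists_shiCoeff_map_residueSwap (by omega)
    (hperm.nodup_iff.2 (List.nodup_range.map (add_right_injective _)))
    (hres i (by omega)) (hres (i + 1) hi)
  rwa [← hl', hlen] at hcross

/-- Crossing the wall corresponding to the finite simple reflection σ_i:
the Shi coefficient vectors of the alcoves labelled by μ and μσ_i agree in all
coordinates except exactly one, where they differ by exactly 1.
Here σ_i swaps the (0-based) entries i and i+1 of μ. -/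
theorem wall_crossing_finite_reflection (e r w i : ℕ) (hr : 2 ≤ r)
    (hre : r < e) (hi : i + 1 < r) (μ : ℕ → ℕ)
    (hμ : ∑ t ∈ Finset.range r, μ t = w) (hne : μ i ≠ μ (i + 1)) :
    let μ' : ℕ → ℕ := fun t =>
      if t = i then μ (i + 1) else if t = i + 1 then μ i else μ t
    let l := sortedBetasDesc e r μ
    let l' := sortedBetasDesc e r μ'
    let K : ℕ → ℕ → ℤ := fun x y => ((l.getD x 0 : ℤ) - (l.getD y 0 : ℤ)).fdiv e
    let K' : ℕ → ℕ → ℤ := fun x y =>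
      ((l'.getD x 0 : ℤ) - (l'.getD y 0 : ℤ)).fdiv e
    ∃ x y, x < y ∧ y < r ∧
      (K x y = K' x y + 1 ∨ K' x y = K x y + 1) ∧
      ∀ x' y', x' < y' → y' < r → (x', y') ≠ (x, y) → K x' y' = K' x' y' :=
  wall_crossing_finite_reflection_general e r i hre hi μ hne
end

section
/- Fix integers e > r ≥ 2. Let μ = (μ₁,...,μ_r) be a weak composition of w with μ₁ ≥ 1 and μ₁ ≠ μ_r + 1, and consider beta numbers β_t = μ_t·e + (e − r + t − 1). Let μσ₀ = (μ_r + 1, μ₂, ..., μ_{r−1}, μ₁ − 1) and β'_t the corresponding beta numbers. Then the level-e Shi coefficients ⌊(β_x − β_y)/e⌋ (over the sorted sequences, for all pairs x < y) computed from β and β' agree for all pairs except exactly one, for which they differ by exactly 1. -/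
/-!
Write the beta numbers as β_t = μ_t·e + c_t with the distinct residues c_t = e − r + t < e.
The Shi coefficient ⌊(β_s − β_t)/e⌋ is then μ_s − μ_t − [s < t]. Passing to μσ₀ moves the
bead β₀ = (μ₀, e − r) to (μ₀ − 1, e − 1) and the bead β_{r−1} = (μ_{r−1}, e − 1) to
(μ_{r−1} + 1, e − r), fixing all others: in terms of the transposition τ = (0 r−1), bead t
of μ goes to bead τ t of μσ₀. From the formula, this changes the Shi coefficient of the pair
{β₀, β_{r−1}} by exactly one and no other. The sign of a Shi coefficient records the order of
the two beads, and that of the special pair survives because μ₀ ≠ μ_{r−1} + 1; so both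
sorted lists list the beads in the same order, and the special pair sits at the same two
positions in both.
-/

def shiCoeff (e a b : ℕ) : ℤ := ((a : ℤ) - b).fdiv e

theorem shiCoeff_nonneg_iff {e : ℕ} (he : 0 < e) {a b : ℕ} : 0 ≤ shiCoeff e a b ↔ b ≤ a := by
  rw [shiCoeff, Int.fdiv_eq_ediv_of_nonneg _ (Int.natCast_nonneg e),
    Int.ediv_nonneg_iff_of_pos (by exact_mod_cast he)]
  omega

theorem shiCoeff_mul_add {e c d : ℕ} (hc : c < e) (hd : d < e) (q q' : ℕ) :
    shiCoeff e (q * e + c) (q' * e + d) = (q : ℤ) - q' - if c < d then 1 else 0 := by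
  have he : (0 : ℤ) < e := by omega
  have hsplit : ((q * e + c : ℕ) : ℤ) - ((q' * e + d : ℕ) : ℤ) =
      ((c : ℤ) - d + if c < d then (e : ℤ) else 0) +
        ((q : ℤ) - q' - if c < d then 1 else 0) * e := by
    split_ifs <;> push_cast <;> ring
  rw [shiCoeff, hsplit, Int.fdiv_eq_ediv_of_nonneg _ he.le, Int.add_mul_ediv_right _ _ he.ne',
    Int.ediv_eq_zero_of_lt (by split_ifs <;> omega) (by split_ifs <;> omega), zero_add]

theorem Multiset.sort_map_coe_eq_map_mergeSort {ι α : Type*} [LinearOrder α] (L : List ι)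
    {f g : ι → α} (hfg : ∀ a ∈ L, ∀ b ∈ L, f a ≤ f b ↔ g a ≤ g b) :
    ((L : Multiset ι).map g).sort (· ≤ ·) = (L.mergeSort fun a b => f a ≤ f b).map g := by
  rw [Multiset.map_coe, Multiset.coe_sort, List.map_mergeSort]
  intro a ha b hb
  simp [hfg a ha b hb]

theorem List.getD_map_of_lt {α β : Type*} {l : List α} (f : α → β) {x : ℕ} (hx : x < l.length)
    (d : α) (d' : β) : (l.map f).getD x d' = f (l.getD x d) := by
  simp [List.getD_eq_getElem?_getD, hx]

theorem List.Nodup.exists_unique_pair_getD {ι : Type*} {ρ : List ι} (hρ : ρ.Nodup) (d : ι)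
    {a b : ι} (ha : a ∈ ρ) (hb : b ∈ ρ) (hab : a ≠ b) :
    ∃ x y, x < y ∧ y < ρ.length ∧ s(ρ.getD x d, ρ.getD y d) = s(a, b) ∧
      ∀ x' y', x' < y' → y' < ρ.length → s(ρ.getD x' d, ρ.getD y' d) = s(a, b) →
        (x', y') = (x, y) := by
  obtain ⟨i, hi, rfl⟩ := List.getElem_of_mem ha
  obtain ⟨j, hj, rfl⟩ := List.getElem_of_mem hb
  have hij : i ≠ j := fun h => hab (by subst h; rfl)
  have getD_eq : ∀ x (hx : x < ρ.length), ρ.getD x d = ρ[x] := fun x hx => by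
    simp [List.getD_eq_getElem?_getD, hx]
  have getD_eq_iff : ∀ x (hx : x < ρ.length) k (hk : k < ρ.length), ρ.getD x d = ρ[k] ↔ x = k :=
    fun x hx k hk => by rw [getD_eq x hx, hρ.getElem_inj_iff]
  refine ⟨min i j, max i j, by omega, by omega, ?_, fun x' y' hxy hy h => ?_⟩
  · rw [getD_eq _ (by omega), getD_eq _ (by omega)]
    rcases le_total i j with h | h
    · simp [min_eq_left h, max_eq_right h]
    · simp [min_eq_right h, max_eq_left h, Sym2.eq_swap]
  · rw [Sym2.eq_iff, getD_eq_iff x' (by omega), getD_eq_iff y' hy, getD_eq_iff x' (by omega),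
      getD_eq_iff y' hy] at h
    ext <;> simp only <;> omega

theorem Finset.map_swap_range {r a b : ℕ} (ha : a < r) (hb : b < r) :
    (Finset.range r).map (Equiv.swap a b : ℕ ↪ ℕ) = Finset.range r :=
  Finset.map_perm fun x hx => by
    by_contra h
    exact hx (Equiv.swap_apply_of_ne_of_ne (by simp at h; omega) (by simp at h; omega))

theorem Equiv.swap_apply_lt {r a b t : ℕ} (ha : a < r) (hb : b < r) (ht : t < r) :
    Equiv.swap a b t < r := by
  rw [Equiv.swap_apply_def]
  split_ifs <;> omega

def betaNumber (e r : ℕ) (μ : ℕ → ℕ) (t : ℕ) : ℕ := μ t * e + (e - r + t)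

def affineReflection (r : ℕ) (μ : ℕ → ℕ) : ℕ → ℕ := fun t =>
  if t = 0 then μ (r - 1) + 1 else if t = r - 1 then μ 0 - 1 else μ t

theorem shiCoeff_betaNumber {e r : ℕ} (hre : r ≤ e) (μ : ℕ → ℕ) {s t : ℕ} (hs : s < r)
    (ht : t < r) :
    shiCoeff e (betaNumber e r μ s) (betaNumber e r μ t) =
      (μ s : ℤ) - μ t - if s < t then 1 else 0 := by
  rw [betaNumber, betaNumber, shiCoeff_mul_add (by omega) (by omega)]
  simp only [Nat.add_lt_add_iff_left]

section AffineReflection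

variable {e r : ℕ} {μ : ℕ → ℕ}

theorem betaNumber_le_iff_affineReflection_swap (hre : r ≤ e) (hpos : 1 ≤ μ 0)
    (hne : μ 0 ≠ μ (r - 1) + 1) {s t : ℕ} (hs : s < r) (ht : t < r) :
    betaNumber e r μ s ≤ betaNumber e r μ t ↔
      betaNumber e r (affineReflection r μ) (Equiv.swap 0 (r - 1) s) ≤
        betaNumber e r (affineReflection r μ) (Equiv.swap 0 (r - 1) t) := by
  have he : 0 < e := by omega
  rw [← shiCoeff_nonneg_iff he, ← shiCoeff_nonneg_iff he, shiCoeff_betaNumber hre μ ht hs,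
    shiCoeff_betaNumber hre _ (Equiv.swap_apply_lt (by omega) (by omega) ht)
      (Equiv.swap_apply_lt (by omega) (by omega) hs)]
  simp only [affineReflection, Equiv.swap_apply_def]
  split_ifs <;> subst_vars <;> omega

theorem exists_perm_sortedBetasDesc_eq_map (hre : r ≤ e) (hpos : 1 ≤ μ 0)
    (hne : μ 0 ≠ μ (r - 1) + 1) :
    ∃ ρ : List ℕ, ρ.Perm (List.range r) ∧ sortedBetasDesc e r μ = ρ.map (betaNumber e r μ) ∧
      sortedBetasDesc e r (affineReflection r μ) =
        ρ.map fun t => betaNumber e r (affineReflection r μ) (Equiv.swap 0 (r - 1) t) := by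
  rcases Nat.eq_zero_or_pos r with rfl | hr
  · exact ⟨[], List.Perm.nil, by simp [sortedBetasDesc], by simp [sortedBetasDesc]⟩
  have hrange : (Finset.range r).val = (List.range r : Multiset ℕ) := by
    rw [Finset.range_val, Multiset.coe_range]
  have hswap : (Finset.range r).val.map (betaNumber e r (affineReflection r μ)) =
      (Finset.range r).val.map
        fun t => betaNumber e r (affineReflection r μ) (Equiv.swap 0 (r - 1) t) := by
    conv_lhs => rw [← Finset.map_swap_range (a := 0) (b := r - 1) (by omega) (by omega)]
    rw [Finset.map_val, Multiset.map_map]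
    rfl
  refine ⟨((List.range r).mergeSort fun s t => betaNumber e r μ s ≤ betaNumber e r μ t).reverse,
    (List.reverse_perm _).trans (List.mergeSort_perm _ _), ?_, ?_⟩
  · show (((Finset.range r).val.map (betaNumber e r μ)).sort (· ≤ ·)).reverse = _
    rw [hrange, Multiset.sort_map_coe_eq_map_mergeSort _ fun _ _ _ _ => Iff.rfl,
      List.map_reverse]
  · show (((Finset.range r).val.map (betaNumber e r (affineReflection r μ))).sort
      (· ≤ ·)).reverse = _
    rw [hswap, hrange, Multiset.sort_map_coe_eq_map_mergeSort _ fun s hs t ht =>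
      betaNumber_le_iff_affineReflection_swap hre hpos hne (List.mem_range.mp hs)
        (List.mem_range.mp ht), List.map_reverse]

theorem shiCoeff_betaNumber_affineReflection_swap (hre : r ≤ e) (hpos : 1 ≤ μ 0) {s t : ℕ}
    (hs : s < r) (ht : t < r) :
    shiCoeff e (betaNumber e r (affineReflection r μ) (Equiv.swap 0 (r - 1) s))
        (betaNumber e r (affineReflection r μ) (Equiv.swap 0 (r - 1) t)) =
      shiCoeff e (betaNumber e r μ s) (betaNumber e r μ t) +
        (if s = r - 1 ∧ t = 0 then 1 else 0) - (if s = 0 ∧ t = r - 1 then 1 else 0) := by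
  rw [shiCoeff_betaNumber hre _ (Equiv.swap_apply_lt (by omega) (by omega) hs)
      (Equiv.swap_apply_lt (by omega) (by omega) ht), shiCoeff_betaNumber hre _ hs ht]
  simp only [affineReflection, Equiv.swap_apply_def]
  split_ifs <;> subst_vars <;> omega

theorem shiCoeff_betaNumber_affineReflection_swap_of_ne (hre : r ≤ e) (hpos : 1 ≤ μ 0)
    {s t : ℕ} (hs : s < r) (ht : t < r) (hst : s(s, t) ≠ s(0, r - 1)) :
    shiCoeff e (betaNumber e r (affineReflection r μ) (Equiv.swap 0 (r - 1) s))
        (betaNumber e r (affineReflection r μ) (Equiv.swap 0 (r - 1) t)) =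
      shiCoeff e (betaNumber e r μ s) (betaNumber e r μ t) := by
  rw [Ne, Sym2.eq_iff] at hst
  rw [shiCoeff_betaNumber_affineReflection_swap hre hpos hs ht, if_neg (by tauto),
    if_neg (by tauto), add_zero, sub_zero]

theorem shiCoeff_betaNumber_affineReflection_swap_of_eq (hr : 2 ≤ r) (hre : r ≤ e)
    (hpos : 1 ≤ μ 0) {s t : ℕ} (hs : s < r) (ht : t < r) (hst : s(s, t) = s(0, r - 1)) :
    shiCoeff e (betaNumber e r μ s) (betaNumber e r μ t) =
        shiCoeff e (betaNumber e r (affineReflection r μ) (Equiv.swap 0 (r - 1) s))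
          (betaNumber e r (affineReflection r μ) (Equiv.swap 0 (r - 1) t)) + 1 ∨
      shiCoeff e (betaNumber e r (affineReflection r μ) (Equiv.swap 0 (r - 1) s))
          (betaNumber e r (affineReflection r μ) (Equiv.swap 0 (r - 1) t)) =
        shiCoeff e (betaNumber e r μ s) (betaNumber e r μ t) + 1 := by
  rw [shiCoeff_betaNumber_affineReflection_swap hre hpos hs ht]
  rw [Sym2.eq_iff] at hst
  rcases hst with ⟨rfl, rfl⟩ | ⟨rfl, rfl⟩ <;> split_ifs <;> omega

end AffineReflection

theorem wall_crossing_affine_reflection_general (e r : ℕ) (hr : 2 ≤ r)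
    (hre : r < e) (μ : ℕ → ℕ)
    (hpos : 1 ≤ μ 0) (hne : μ 0 ≠ μ (r - 1) + 1) :
    let μ' : ℕ → ℕ := fun t =>
      if t = 0 then μ (r - 1) + 1 else if t = r - 1 then μ 0 - 1 else μ t
    let l := sortedBetasDesc e r μ
    let l' := sortedBetasDesc e r μ'
    let K : ℕ → ℕ → ℤ := fun x y => ((l.getD x 0 : ℤ) - (l.getD y 0 : ℤ)).fdiv e
    let K' : ℕ → ℕ → ℤ := fun x y =>
      ((l'.getD x 0 : ℤ) - (l'.getD y 0 : ℤ)).fdiv e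
    ∃ x y, x < y ∧ y < r ∧
      (K x y = K' x y + 1 ∨ K' x y = K x y + 1) ∧
      ∀ x' y', x' < y' → y' < r → (x', y') ≠ (x, y) → K x' y' = K' x' y' := by
  intro μ' l l' K K'
  obtain ⟨ρ, hρ, hl, hl'⟩ := exists_perm_sortedBetasDesc_eq_map hre.le hpos hne
  have hlen : ρ.length = r := by rw [hρ.length_eq, List.length_range]
  have hρr : ∀ x < r, ρ.getD x 0 < r := fun x hx => List.mem_range.mp <| hρ.subset <| by
    rw [List.getD_eq_getElem _ _ (by omega)]; exact List.getElem_mem _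
  have hK : ∀ x < r, ∀ y < r, K x y = shiCoeff e (betaNumber e r μ (ρ.getD x 0))
      (betaNumber e r μ (ρ.getD y 0)) := fun x hx y hy => by
    show shiCoeff e (l.getD x 0) (l.getD y 0) = _
    rw [show l = _ from hl, List.getD_map_of_lt _ (by omega) 0, List.getD_map_of_lt _ (by omega) 0]
  have hK' : ∀ x < r, ∀ y < r, K' x y =
      shiCoeff e (betaNumber e r (affineReflection r μ) (Equiv.swap 0 (r - 1) (ρ.getD x 0)))
        (betaNumber e r (affineReflection r μ) (Equiv.swap 0 (r - 1) (ρ.getD y 0))) :=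
    fun x hx y hy => by
      show shiCoeff e (l'.getD x 0) (l'.getD y 0) = _
      rw [show l' = _ from hl', List.getD_map_of_lt _ (by omega) 0,
        List.getD_map_of_lt _ (by omega) 0]
  have hmem : ∀ t < r, t ∈ ρ := fun t ht => hρ.mem_iff.mpr (List.mem_range.mpr ht)
  obtain ⟨x, y, hxy, hy, hpair, huniq⟩ :=
    (hρ.nodup_iff.mpr List.nodup_range).exists_unique_pair_getD 0 (hmem 0 (by omega))
      (hmem (r - 1) (by omega)) (by omega : 0 ≠ r - 1)
  refine ⟨x, y, hxy, hlen ▸ hy, ?_, fun x' y' hxy' hy' hne' => ?_⟩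
  · rw [hK x (by omega) y (by omega), hK' x (by omega) y (by omega)]
    exact shiCoeff_betaNumber_affineReflection_swap_of_eq hr hre.le hpos (hρr x (by omega))
      (hρr y (by omega)) hpair
  · rw [hK x' (by omega) y' hy', hK' x' (by omega) y' hy']
    exact (shiCoeff_betaNumber_affineReflection_swap_of_ne hre.le hpos (hρr x' (by omega))
      (hρr y' hy') fun h => hne' (huniq x' y' hxy' (hlen ▸ hy') h)).symm

/-- Crossing the wall corresponding to the affine simple reflection σ₀:
for μσ₀ = (μ_r + 1, μ₂, …, μ_{r−1}, μ₁ − 1), the Shi coefficient vectors of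
the alcoves labelled by μ and μσ₀ agree in all coordinates except exactly one,
where they differ by exactly 1. -/
theorem wall_crossing_affine_reflection (e r w : ℕ) (hr : 2 ≤ r)
    (hre : r < e) (μ : ℕ → ℕ) (hμ : ∑ t ∈ Finset.range r, μ t = w)
    (hpos : 1 ≤ μ 0) (hne : μ 0 ≠ μ (r - 1) + 1) :
    let μ' : ℕ → ℕ := fun t =>
      if t = 0 then μ (r - 1) + 1 else if t = r - 1 then μ 0 - 1 else μ t
    let l := sortedBetasDesc e r μ
    let l' := sortedBetasDesc e r μ'
    let K : ℕ → ℕ → ℤ := fun x y => ((l.getD x 0 : ℤ) - (l.getD y 0 : ℤ)).fdiv e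
    let K' : ℕ → ℕ → ℤ := fun x y =>
      ((l'.getD x 0 : ℤ) - (l'.getD y 0 : ℤ)).fdiv e
    ∃ x y, x < y ∧ y < r ∧
      (K x y = K' x y + 1 ∨ K' x y = K x y + 1) ∧
      ∀ x' y', x' < y' → y' < r → (x', y') ≠ (x, y) → K x' y' = K' x' y' :=
  wall_crossing_affine_reflection_general e r hr hre μ hpos hne
end
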